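/- Let A, B be positive definite d×d matrices with B ⪯ A and det(A) ≤ 2 det(B). Then for every nonzero x ∈ R^d, ||x||²_{B^{-1}} ≤ 2 ||x||²_{A^{-1}}, i.e., xᵀB^{-1}x ≤ 2 xᵀA^{-1}x. -/

import Mathlib

/-!
Conjugate by `A^{-1/2}`: the matrix `N = A^{-1/2} B A^{-1/2}` satisfies `N ≤ 1`, so its eigenvalues
lie in `(0, 1]` and each of them is at least their product `det N = det B / det A`. Hence
`N⁻¹ ≤ (det A / det B) • 1`, and conjugating back gives `B⁻¹ ≤ (det A / det B) • A⁻¹ ≤ 2 • A⁻¹`.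
-/

open Matrix Ring CFC
open scoped MatrixOrder ComplexOrder

namespace Matrix

variable {n : Type*} [Fintype n]

theorem dotProduct_mulVec_le_of_le {𝕜 : Type*} [RCLike 𝕜] {A B : Matrix n n 𝕜} (h : A ≤ B)
    (x : n → 𝕜) : star x ⬝ᵥ A *ᵥ x ≤ star x ⬝ᵥ B *ᵥ x := by
  simpa [sub_mulVec, dotProduct_sub] using (le_iff.1 h).dotProduct_mulVec_nonneg x

variable [DecidableEq n]

theorem det_conjSqrt {𝕜 : Type*} [RCLike 𝕜] {A : Matrix n n 𝕜} (hA : A.PosSemidef)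
    (B : Matrix n n 𝕜) : (conjSqrt A B).det = A.det * B.det := by
  rw [conjSqrt_apply, det_mul, det_mul, mul_right_comm, ← det_mul, sqrt_mul_sqrt_self A hA.nonneg]

theorem PosDef.inv_le_inv_det_smul_one {N : Matrix n n ℝ} (hN : N.PosDef) (hN1 : N ≤ 1) :
    N⁻¹ ≤ N.det⁻¹ • 1 := by
  have hH := hN.isHermitian
  have hpos : ∀ i, 0 < hH.eigenvalues i := hN.eigenvalues_pos
  have hle : ∀ i, hH.eigenvalues i ≤ 1 := fun i =>
    (CFC.le_one_iff N hH.isSelfAdjoint).1 hN1 _ (hH.eigenvalues_mem_spectrum_real i)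
  have hdet : N.det = ∏ i, hH.eigenvalues i := by simpa using hH.det_eq_prod_eigenvalues
  rw [← Algebra.algebraMap_eq_smul_one, nonsing_inv_eq_ringInverse,
    ← cfc_ringInverse_id (R := ℝ) (a := N) hN.isUnit hH.isSelfAdjoint,
    cfc_le_algebraMap_iff _ _ _ ?_ hH.isSelfAdjoint, hH.spectrum_real_eq_range_eigenvalues]
  · rintro _ ⟨i, rfl⟩
    rw [hdet]
    gcongr
    · exact Finset.prod_pos fun j _ => hpos j
    · simpa using Finset.prod_le_prod_of_subset_of_le_one (Finset.subset_univ {i})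
        (fun j _ => (hpos j).le) (fun j _ _ => hle j)
  · exact continuousOn_inv₀.mono fun x hx =>
      ((isStrictlyPositive_iff_posDef.2 hN).spectrum_pos hx).ne'

theorem PosDef.inv_le_det_div_smul_inv {A B : Matrix n n ℝ} (hB : B.PosDef) (hBA : B ≤ A) :
    B⁻¹ ≤ (A.det / B.det) • A⁻¹ := by
  have hA : IsStrictlyPositive A := isStrictlyPositive_iff_posDef.2 <| by
    simpa using hB.add_posSemidef (le_iff.1 hBA)
  have hA_inv := hA.ringInverse
  set N := conjSqrt A⁻¹ʳ B with hN
  have hN1 : N ≤ 1 := conjSqrt_ringInverse_self A ▸ conjSqrt_le_conjSqrt hBA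
  have hNpos : N.PosDef := isStrictlyPositive_iff_posDef.1 <|
    (isStrictlyPositive_conjSqrt_iff _ _ hA_inv).2 (isStrictlyPositive_iff_posDef.2 hB)
  have hNdet : N.det⁻¹ = A.det / B.det := by
    rw [hN, det_conjSqrt hA_inv.nonneg.posSemidef, ← nonsing_inv_eq_ringInverse, det_nonsing_inv,
      Ring.inverse_eq_inv', mul_inv, inv_inv, div_eq_mul_inv]
  have key := conjSqrt_le_conjSqrt (c := A⁻¹ʳ) (hNpos.inv_le_inv_det_smul_one hN1)
  rwa [nonsing_inv_eq_ringInverse, hN, ringInverse_conjSqrt _ _ hA_inv, inverse_inverse hA.isUnit,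
    conjSqrt_ringInverse_conjSqrt _ _ hA, map_smul, conjSqrt_one _ hA_inv.nonneg, hNdet,
    ← nonsing_inv_eq_ringInverse, ← nonsing_inv_eq_ringInverse] at key

end Matrix

theorem inv_quad_form_doubling_general (d : ℕ)
    (A B : Matrix (Fin d) (Fin d) ℝ)
    (hB : B.PosDef)
    (hBA : (A - B).PosSemidef) (hdet : A.det ≤ 2 * B.det) :
    ∀ x : Fin d → ℝ, x ≠ 0 → x ⬝ᵥ B⁻¹ *ᵥ x ≤ 2 * (x ⬝ᵥ A⁻¹ *ᵥ x) := by
  intro x _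
  have hA : A.PosDef := by simpa using hB.add_posSemidef hBA
  have hratio : A.det / B.det ≤ 2 := (div_le_iff₀ hB.det_pos).2 hdet
  have hle : B⁻¹ ≤ (2 : ℝ) • A⁻¹ :=
    (hB.inv_le_det_div_smul_inv hBA).trans <|
      smul_le_smul_of_nonneg_right hratio (nonneg_iff_posSemidef.2 hA.inv.posSemidef)
  simpa [smul_mulVec] using dotProduct_mulVec_le_of_le hle x

theorem inv_quad_form_doubling (d : ℕ)
    (A B : Matrix (Fin d) (Fin d) ℝ)
    (hA : A.PosDef) (hB : B.PosDef)
    (hBA : (A - B).PosSemidef) (hdet : A.det ≤ 2 * B.det) :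
    ∀ x : Fin d → ℝ, x ≠ 0 → x ⬝ᵥ B⁻¹ *ᵥ x ≤ 2 * (x ⬝ᵥ A⁻¹ *ᵥ x) :=
  inv_quad_form_doubling_general d A B hB hBA hdet
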